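/- With the same setup, an element x ∈ DK(Y)_n lies in the subgroup D_n spanned by the degenerate simplices (the images of all degeneracy maps u_j) if and only if π_{ι_n}(x) = 0, i.e. its component along the top index ι_n : [n] → [n] vanishes. -/

import Mathlib

open CategoryTheory SimplexCategory

variable (Y : ℕ → Type) [∀ k, AddCommGroup (Y k)]

/-- Indices of the DK direct sum: injective order-preserving maps `[k] → [n]` with `α 0 = 0`. -/
def DKIdx (n : ℕ) : Type :=
  {p : Σ k : ℕ, SimplexCategory.mk k ⟶ SimplexCategory.mk n //
    Function.Injective p.2.toOrderHom ∧ p.2.toOrderHom 0 = 0}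

/-- The `n`-simplex abelian group `DK(Y)_n = ⊕_α Y_k`. -/
def DK (n : ℕ) : Type := ∀ p : DKIdx n, Y p.1.1

instance (n : ℕ) : AddCommGroup (DK Y n) :=
  inferInstanceAs (AddCommGroup (∀ p : DKIdx n, Y p.1.1))

/-- Projection `π_γ`, with the convention `π_γ = 0` for `γ` not injective (or not 0-preserving). -/
def DKproj {n l : ℕ} (γ : SimplexCategory.mk l ⟶ SimplexCategory.mk n) (x : DK Y n) : Y l :=
  if h : Function.Injective γ.toOrderHom ∧ γ.toOrderHom 0 = 0 then x ⟨⟨l, γ⟩, h⟩ else 0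

/-- Pullback `θ^*` along an order map, defined by `π_β θ^* = π_{θ∘β}`. -/
def DKpull {m n : ℕ} (θ : SimplexCategory.mk m ⟶ SimplexCategory.mk n) (x : DK Y n) : DK Y m :=
  fun p => DKproj Y (p.1.2 ≫ θ) x

/-- The map `θ' : [m+1] → [n+1]`, `θ'(0)=0`, `θ'(i+1)=θ(i)+1`, on monotone maps. -/
def primeFun {m n : ℕ} (θ : Fin (m + 1) →o Fin (n + 1)) : Fin (m + 2) →o Fin (n + 2) where
  toFun i := if h : (i : ℕ) = 0 then 0 else
    ⟨((θ ⟨(i : ℕ) - 1, by have := i.isLt; omega⟩ : Fin (n + 1)) : ℕ) + 1, by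
      have := (θ ⟨(i : ℕ) - 1, by have := i.isLt; omega⟩).isLt; omega⟩
  monotone' := by
    intro a b hab
    dsimp only
    by_cases ha : (a : ℕ) = 0
    · by_cases hb : (b : ℕ) = 0 <;> simp [ha, hb, Fin.le_def]
    · have hb : (b : ℕ) ≠ 0 := by have := Fin.le_def.mp hab; omega
      rw [dif_neg ha, dif_neg hb]
      have h2 : (⟨(a : ℕ) - 1, by have := a.isLt; omega⟩ : Fin (m + 1)) ≤
          ⟨(b : ℕ) - 1, by have := b.isLt; omega⟩ := by
        have := Fin.le_def.mp hab; simp [Fin.le_def]; omega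
      have := θ.monotone h2
      simp only [Fin.le_def] at this ⊢
      omega

/-- The map `θ' : [m+1] ⟶ [n+1]` in the simplex category. -/
def DKprime {m n : ℕ} (θ : SimplexCategory.mk m ⟶ SimplexCategory.mk n) :
    SimplexCategory.mk (m + 1) ⟶ SimplexCategory.mk (n + 1) :=
  SimplexCategory.mkHom (primeFun θ.toOrderHom)

/-- The zeroth face of `DK(Y)`:
`π_β d_0 = ∂ π_{β'} − Σ_{i=1}^{l+1} (−1)^i π_{β' δ_i}`. -/
def DKd0 (D : ∀ k, Y (k + 1) →+ Y k) {n : ℕ} (x : DK Y (n + 1)) : DK Y n :=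
  fun p =>
    D p.1.1 (DKproj Y (DKprime p.1.2) x) -
      ∑ j : Fin (p.1.1 + 1), ((-1 : ℤ) ^ ((j : ℕ) + 1)) •
        DKproj Y (SimplexCategory.δ j.succ ≫ DKprime p.1.2) x

/-- The degeneracy `u_j` of `DK(Y)`, `π_β u_j = π_{υ_j β}`. -/
def DKu {n : ℕ} (j : Fin (n + 1)) (x : DK Y n) : DK Y (n + 1) :=
  DKpull Y (SimplexCategory.σ j) x

/-- The subgroup spanned by the degenerate simplices. -/
def Dsub : ∀ n, AddSubgroup (DK Y n)
  | 0 => ⊥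
  | (n + 1) => AddSubgroup.closure (⋃ j : Fin (n + 1), Set.range (DKu Y j))

/-- The initial inclusion `σ_k : [k] → [n]`. -/
def initialIncl (k n : ℕ) (h : k ≤ n) : SimplexCategory.mk k ⟶ SimplexCategory.mk n :=
  SimplexCategory.mkHom
    ⟨fun i => ⟨(i : ℕ), by have := i.isLt; omega⟩,
     fun a b hab => by simp only [Fin.le_def] at hab ⊢; omega⟩

/-- The final inclusion `τ_k : [k] → [n]`, `i ↦ i + (n − k)`. -/
def finalIncl (k n : ℕ) (h : k ≤ n) : SimplexCategory.mk k ⟶ SimplexCategory.mk n :=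
  SimplexCategory.mkHom
    ⟨fun i => ⟨(i : ℕ) + (n - k), by have := i.isLt; omega⟩,
     fun a b hab => by simp only [Fin.le_def] at hab ⊢; omega⟩

/-! The top component of `u_j w` is `π_{σ_j} w = 0`, because `σ_j` is not injective, so `D_{n+1}`
lies in the kernel of `π_{ι}`. Conversely, an element of that kernel is a sum of elements `y`
concentrated at one index `f : [k] → [n+1]` with `k ≤ n`. Since `f 0 = 0` and `f` is not
surjective, some `j` has `j ∈ range f` and `j + 1 ∉ range f`. Then `g = f ≫ σ_j` is again an
index, its lifts along `σ_j` are `f = g ≫ δ_{j+1}` and `g ≫ δ_j`, and so `u_j` of `y` placed at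
`g` is `y` at `f` plus `y` at `g ≫ δ_j`. The map `g ≫ δ_j` is pointwise at least `f` and
different from it, so a descending induction on the values of `f` concludes. -/

open Simplicial

lemma Fin.exists_castSucc_and_not_succ {n : ℕ} {P : Fin (n + 2) → Prop} (h0 : P 0)
    (h : ¬ ∀ i, P i) : ∃ j : Fin (n + 1), P j.castSucc ∧ ¬ P j.succ := by
  by_contra! H
  exact h fun i => Fin.induction h0 H i

namespace SimplexCategory

lemma comp_σ_comp_δ_succ {m n : ℕ} {f : ⦋m⦌ ⟶ ⦋n + 1⦌} {j : Fin (n + 1)}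
    (hf : ∀ i, f.toOrderHom i ≠ j.succ) : (f ≫ σ j) ≫ δ j.succ = f := by
  ext i : 3
  exact Fin.succ_succAbove_predAbove (hf i)

lemma comp_σ_comp_δ_castSucc {m n : ℕ} {f : ⦋m⦌ ⟶ ⦋n + 1⦌} {j : Fin (n + 1)}
    (hf : ∀ i, f.toOrderHom i ≠ j.castSucc) : (f ≫ σ j) ≫ δ j.castSucc = f := by
  ext i : 3
  exact Fin.succAbove_predAbove (hf i)

lemma σ_not_injective {n : ℕ} (j : Fin (n + 1)) : ¬ Function.Injective (σ j).toOrderHom :=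
  fun h => (Fin.castSucc_lt_succ (i := j)).ne (h (a₁ := j.castSucc) (a₂ := j.succ) (by simp [σ]))

lemma eq_comp_δ_of_comp_σ_eq {m n : ℕ} {f : ⦋m⦌ ⟶ ⦋n + 1⦌} {g : ⦋m⦌ ⟶ ⦋n⦌}
    {j : Fin (n + 1)} (hg : Function.Injective g.toOrderHom) (h : f ≫ σ j = g) :
    f = g ≫ δ j.succ ∨ f = g ≫ δ j.castSucc := by
  subst h
  by_cases hs : ∃ i, f.toOrderHom i = j.succ
  · obtain ⟨i₁, hi₁⟩ := hs
    refine Or.inr (comp_σ_comp_δ_castSucc fun i₂ hi₂ =>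
      (Fin.castSucc_lt_succ (i := j)).ne ?_).symm
    have : i₂ = i₁ := hg (by simp [σ, hi₁, hi₂])
    rw [← hi₁, ← hi₂, this]
  · push Not at hs
    exact Or.inl (comp_σ_comp_δ_succ hs).symm

lemma succAbove_succ_le_succAbove_castSucc {n : ℕ} (j b : Fin (n + 1)) :
    j.succ.succAbove b ≤ j.castSucc.succAbove b := by
  simp only [Fin.le_def, Fin.succAbove, Fin.lt_def]
  split_ifs <;> simp_all; omega

def Hom.deficit {k n : ℕ} (f : ⦋k⦌ ⟶ ⦋n⦌) : ℕ := ∑ i, (n - (f.toOrderHom i : ℕ))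

lemma deficit_comp_δ_castSucc_lt {k n : ℕ} {g : ⦋k⦌ ⟶ ⦋n⦌} {j : Fin (n + 1)}
    (hne : g ≫ δ j.succ ≠ g ≫ δ j.castSucc) :
    (g ≫ δ j.castSucc).deficit < (g ≫ δ j.succ).deficit := by
  have hle (i) : (g ≫ δ j.succ).toOrderHom i ≤ (g ≫ δ j.castSucc).toOrderHom i :=
    succAbove_succ_le_succAbove_castSucc j _
  obtain ⟨i, hi⟩ : ∃ i, (g ≫ δ j.succ).toOrderHom i ≠ (g ≫ δ j.castSucc).toOrderHom i := by
    by_contra! h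
    exact hne (Hom.ext _ _ (OrderHom.ext _ _ (funext h)))
  refine Finset.sum_lt_sum (fun i _ => Nat.sub_le_sub_left (hle i) _) ⟨i, Finset.mem_univ _, ?_⟩
  have hlt := Fin.lt_def.mp ((hle i).lt_of_ne hi)
  have htop := ((g ≫ δ j.castSucc).toOrderHom i).isLt
  simp only [len_mk] at htop
  omega

end SimplexCategory

abbrev IsDKIdx {k n : ℕ} (f : ⦋k⦌ ⟶ ⦋n⦌) : Prop :=
  Function.Injective f.toOrderHom ∧ f.toOrderHom 0 = 0

namespace DKIdx

instance (n : ℕ) : DecidableEq (DKIdx n) := by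
  unfold DKIdx; infer_instance

lemma len_le {n : ℕ} (p : DKIdx n) : p.1.1 ≤ n := by
  simpa using Fintype.card_le_of_injective _ p.2.1

instance (n : ℕ) : Finite (DKIdx n) :=
  Finite.of_injective (β := Σ k : Fin (n + 1), ⦋k⦌ ⟶ ⦋n⦌)
    (fun p => ⟨⟨p.1.1, Nat.lt_succ_of_le p.len_le⟩, p.1.2⟩) (by
      rintro ⟨⟨k, f⟩, hf⟩ ⟨⟨l, g⟩, hg⟩ h
      obtain ⟨⟨⟩, ⟨⟩⟩ := Sigma.mk.inj_iff.mp h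
      rfl)

noncomputable instance (n : ℕ) : Fintype (DKIdx n) := Fintype.ofFinite _

end DKIdx

/-- Like `DKproj`, this is `0` unless `IsDKIdx f`. -/
def DK.single {n k : ℕ} (f : ⦋k⦌ ⟶ ⦋n⦌) (y : Y k) : DK Y n :=
  if h : IsDKIdx f then Pi.single (M := fun p : DKIdx n => Y p.1.1) ⟨⟨k, f⟩, h⟩ y else 0

section

variable {Y}

namespace DK

lemma ext_DKproj {n : ℕ} {x x' : DK Y n}
    (h : ∀ l (g : ⦋l⦌ ⟶ ⦋n⦌), IsDKIdx g → DKproj Y g x = DKproj Y g x') : x = x' := by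
  funext ⟨⟨l, g⟩, hg⟩
  simpa only [DKproj, dif_pos hg] using h l g hg

lemma single_of_isDKIdx {n k : ℕ} {f : ⦋k⦌ ⟶ ⦋n⦌} (hf : IsDKIdx f) (y : Y k) :
    DK.single Y f y = Pi.single (M := fun p : DKIdx n => Y p.1.1) ⟨⟨k, f⟩, hf⟩ y :=
  dif_pos hf

lemma single_of_not_isDKIdx {n k : ℕ} {f : ⦋k⦌ ⟶ ⦋n⦌} (hf : ¬ IsDKIdx f) (y : Y k) :
    DK.single Y f y = 0 :=
  dif_neg hf

lemma single_zero {n k : ℕ} (f : ⦋k⦌ ⟶ ⦋n⦌) : DK.single Y f 0 = 0 := by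
  by_cases hf : IsDKIdx f
  · rw [single_of_isDKIdx hf]
    exact Pi.single_zero _
  · exact single_of_not_isDKIdx hf 0

end DK

lemma DKproj_add {n l : ℕ} (g : ⦋l⦌ ⟶ ⦋n⦌) (x x' : DK Y n) :
    DKproj Y g (x + x') = DKproj Y g x + DKproj Y g x' := by
  unfold DKproj
  split_ifs
  · rfl
  · rw [add_zero]

lemma DKproj_DKpull {m n l : ℕ} (θ : ⦋m⦌ ⟶ ⦋n⦌) {g : ⦋l⦌ ⟶ ⦋m⦌} (hg : IsDKIdx g)
    (x : DK Y n) : DKproj Y g (DKpull Y θ x) = DKproj Y (g ≫ θ) x :=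
  dif_pos hg

lemma DKproj_single_self {n k : ℕ} {f : ⦋k⦌ ⟶ ⦋n⦌} (hf : IsDKIdx f) (y : Y k) :
    DKproj Y f (DK.single Y f y) = y := by
  rw [DK.single_of_isDKIdx hf]
  unfold DKproj
  rw [dif_pos hf]
  exact Pi.single_eq_same (M := fun p : DKIdx n => Y p.1.1) (⟨⟨k, f⟩, hf⟩ : DKIdx n) y

lemma DKproj_single_of_ne {n k l : ℕ} {f : ⦋k⦌ ⟶ ⦋n⦌} {g : ⦋l⦌ ⟶ ⦋n⦌}
    (h : (⟨l, g⟩ : Σ l, ⦋l⦌ ⟶ ⦋n⦌) ≠ ⟨k, f⟩) (y : Y k) :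
    DKproj Y g (DK.single Y f y) = 0 := by
  by_cases hf : IsDKIdx f
  · rw [DK.single_of_isDKIdx hf]
    unfold DKproj
    split_ifs
    · exact Pi.single_eq_of_ne (M := fun p : DKIdx n => Y p.1.1)
        (i := ⟨⟨k, f⟩, hf⟩) (fun e => h (congrArg Subtype.val e)) y
    · rfl
  · rw [DK.single_of_not_isDKIdx hf]
    unfold DKproj
    split_ifs <;> rfl

lemma DKu_mem_Dsub {n : ℕ} (j : Fin (n + 1)) (w : DK Y n) : DKu Y j w ∈ Dsub Y (n + 1) :=
  AddSubgroup.subset_closure (Set.mem_iUnion.mpr ⟨j, w, rfl⟩)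

lemma DKu_apply_id {n : ℕ} (j : Fin (n + 1)) (w : DK Y n) (h : IsDKIdx (𝟙 ⦋n + 1⦌)) :
    DKu Y j w ⟨⟨n + 1, 𝟙 ⦋n + 1⦌⟩, h⟩ = 0 :=
  dif_neg fun hσ => SimplexCategory.σ_not_injective j (by simpa using hσ.1)

lemma DKu_single {n k : ℕ} {g : ⦋k⦌ ⟶ ⦋n⦌} (hg : IsDKIdx g) {j : Fin (n + 1)}
    (hne : g ≫ δ j.succ ≠ g ≫ δ j.castSucc) (y : Y k) :
    DKu Y j (DK.single Y g y) =
      DK.single Y (g ≫ δ j.succ) y + DK.single Y (g ≫ δ j.castSucc) y := by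
  refine DK.ext_DKproj fun l h hh => ?_
  rw [DKproj_add, DKu, DKproj_DKpull _ hh]
  by_cases e : (⟨l, h ≫ σ j⟩ : Σ l, ⦋l⦌ ⟶ ⦋n⦌) = ⟨k, g⟩
  · obtain ⟨rfl, e⟩ := Sigma.mk.inj_iff.mp e
    rw [eq_of_heq e, DKproj_single_self hg]
    rcases SimplexCategory.eq_comp_δ_of_comp_σ_eq hg.1 (eq_of_heq e) with rfl | rfl
    · rw [DKproj_single_self hh, DKproj_single_of_ne (by simpa using hne), add_zero]
    · rw [DKproj_single_self hh, DKproj_single_of_ne (by simpa using hne.symm), zero_add]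
  · have not_lift : ∀ {i : Fin (n + 2)}, δ i ≫ σ j = 𝟙 _ →
        (⟨l, h⟩ : Σ l, ⦋l⦌ ⟶ ⦋n + 1⦌) ≠ ⟨k, g ≫ δ i⟩ := by
      intro i hi he
      obtain ⟨rfl, he⟩ := Sigma.mk.inj_iff.mp he
      obtain rfl := eq_of_heq he
      exact e (by rw [Category.assoc, hi, Category.comp_id])
    rw [DKproj_single_of_ne e, DKproj_single_of_ne (not_lift δ_comp_σ_succ),
      DKproj_single_of_ne (not_lift δ_comp_σ_self), add_zero]

theorem DK.single_mem_Dsub {n k : ℕ} (hk : k ≤ n) (f : ⦋k⦌ ⟶ ⦋n + 1⦌) (y : Y k) :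
    DK.single Y f y ∈ Dsub Y (n + 1) := by
  by_cases hf : IsDKIdx f
  swap
  · rw [DK.single_of_not_isDKIdx hf]
    exact zero_mem _
  have not_surj : ¬ Function.Surjective f.toOrderHom := fun hsurj => by
    have := Fintype.card_le_of_surjective _ hsurj
    simp only [len_mk, Fintype.card_fin] at this
    omega
  obtain ⟨j, ⟨i₀, hi₀⟩, hj⟩ := Fin.exists_castSucc_and_not_succ
    (P := (· ∈ Set.range f.toOrderHom)) ⟨0, hf.2⟩ not_surj
  have hf_eq : (f ≫ σ j) ≫ δ j.succ = f :=
    SimplexCategory.comp_σ_comp_δ_succ fun i hi => hj ⟨i, hi⟩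
  have hg : IsDKIdx (f ≫ σ j) := by
    refine ⟨fun a b hab => hf.1 ?_, by simp [σ, hf.2]⟩
    rw [← hf_eq]
    exact congrArg (δ j.succ).toOrderHom hab
  have hne : (f ≫ σ j) ≫ δ j.succ ≠ (f ≫ σ j) ≫ δ j.castSucc := fun h => by
    have := congrArg (fun φ => φ.toOrderHom i₀) h
    exact (Fin.castSucc_lt_succ (i := j)).ne (by simpa [σ, δ, hi₀] using this)
  have key := DKu_single hg hne y
  rw [hf_eq] at key
  rw [eq_sub_of_add_eq key.symm]
  exact sub_mem (DKu_mem_Dsub j _) (DK.single_mem_Dsub hk _ y)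
termination_by f.deficit
decreasing_by
  simpa only [hf_eq] using SimplexCategory.deficit_comp_δ_castSucc_lt hne

lemma apply_id_eq_zero_of_mem_Dsub {n : ℕ} {x : DK Y (n + 1)} (hx : x ∈ Dsub Y (n + 1))
    (h : IsDKIdx (𝟙 ⦋n + 1⦌)) : x ⟨⟨n + 1, 𝟙 ⦋n + 1⦌⟩, h⟩ = 0 := by
  have hle : Dsub Y (n + 1) ≤ (Pi.evalAddMonoidHom (fun p : DKIdx (n + 1) => Y p.1.1)
      ⟨⟨n + 1, 𝟙 ⦋n + 1⦌⟩, h⟩).ker :=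
    (AddSubgroup.closure_le _).mpr
      (Set.iUnion_subset fun j => Set.range_subset_iff.mpr fun w => DKu_apply_id j w h)
  exact hle hx

lemma mem_Dsub_of_apply_id_eq_zero {n : ℕ} {x : DK Y (n + 1)} (h : IsDKIdx (𝟙 ⦋n + 1⦌))
    (hx : x ⟨⟨n + 1, 𝟙 ⦋n + 1⦌⟩, h⟩ = 0) : x ∈ Dsub Y (n + 1) := by
  rw [← Finset.univ_sum_single x]
  refine sum_mem fun p _ => ?_
  obtain ⟨⟨k, f⟩, hf⟩ := p
  rw [← DK.single_of_isDKIdx hf]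
  rcases (DKIdx.len_le ⟨⟨k, f⟩, hf⟩).lt_or_eq with hk | rfl
  · exact DK.single_mem_Dsub (Nat.lt_succ_iff.mp hk) f _
  · have : Mono f := SimplexCategory.mono_iff_injective.mpr hf.1
    obtain rfl := SimplexCategory.eq_id_of_mono f
    rw [hx, DK.single_zero]
    exact zero_mem _

end

theorem stmt4 (n : ℕ) (x : DK Y (n + 1)) :
    x ∈ Dsub Y (n + 1) ↔
      x ⟨⟨n + 1, 𝟙 (SimplexCategory.mk (n + 1))⟩,
        ⟨fun a b hab => by simpa using hab, by simp⟩⟩ = 0 :=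
  ⟨fun hx => apply_id_eq_zero_of_mem_Dsub hx _, mem_Dsub_of_apply_id_eq_zero _⟩
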